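/- For the path graph Γ on [n+1] with n ≥ 3, the number of intervals γ achieving the maximum value i_max(Γ) of i(γ) equals n+3 if n is even, and (n+3)/2 if n is odd. -/
import Mathlib
open Finset

/-- An interval `{a, a+1, ..., b}` with `1 ≤ a ≤ b ≤ n+1`, viewed inside `[n+1]`. -/
def IsInterval (n : ℕ) (S : Finset ℕ) : Prop :=
  ∃ a b : ℕ, 1 ≤ a ∧ a ≤ b ∧ b ≤ n + 1 ∧ S = Finset.Icc a b

/-- `γ̃` either intersects `γ` nontrivially, or is disjoint from `γ` with
`γ ∪ γ̃` an interval (connected union in the path graph). -/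
def iRel (n : ℕ) (γ J : Finset ℕ) : Prop :=
  (γ ∩ J ≠ ∅ ∧ γ ∩ J ≠ γ ∧ γ ∩ J ≠ J) ∨ (γ ∩ J = ∅ ∧ IsInterval n (γ ∪ J))

/-- `i(γ)`: the number of intervals `γ̃` related to `γ` as above. -/
noncomputable def iCount (n : ℕ) (γ : Finset ℕ) : ℕ :=
  Nat.card {J : Finset ℕ // IsInterval n J ∧ iRel n γ J}

/-- `i_max`: the maximum of `i(γ)` over all intervals `γ`. -/
noncomputable def iMax (n : ℕ) : ℕ :=
  sSup {k | ∃ γ : Finset ℕ, IsInterval n γ ∧ iCount n γ = k}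

lemma icc_inj {c d c' d' : ℕ} (h : c ≤ d) (h' : c' ≤ d')
    (he : Finset.Icc c d = Finset.Icc c' d') : c = c' ∧ d = d' := by
  have h1 : c ∈ Finset.Icc c' d' := he ▸ Finset.mem_Icc.mpr ⟨le_refl c, h⟩
  have h2 : c' ∈ Finset.Icc c d := he ▸ Finset.mem_Icc.mpr ⟨le_refl c', h'⟩
  have h3 : d ∈ Finset.Icc c' d' := he ▸ Finset.mem_Icc.mpr ⟨h, le_refl d⟩
  have h4 : d' ∈ Finset.Icc c d := he ▸ Finset.mem_Icc.mpr ⟨h', le_refl d'⟩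
  simp [Finset.mem_Icc] at *
  omega

lemma icc_inter (a b c d : ℕ) :
    Finset.Icc a b ∩ Finset.Icc c d = Finset.Icc (max a c) (min b d) := by
  ext x
  simp only [Finset.mem_inter, Finset.mem_Icc]
  omega

lemma count_eq {n a b : ℕ} (ha : 1 ≤ a) (hab : a ≤ b) (hbn : b ≤ n + 1) :
    iCount n (Finset.Icc a b) = (b + 1 - a) * ((a - 1) + (n + 1 - b)) := by
  classical
  set S : Finset (ℕ × ℕ) :=
    (Finset.Icc 1 (a-1) ×ˢ Finset.Icc a (b-1)) ∪
    (Finset.Icc (a+1) b ×ˢ Finset.Icc (b+1) (n+1)) ∪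
    (Finset.Icc 1 (a-1) ×ˢ Finset.Icc (a-1) (a-1)) ∪
    (Finset.Icc (b+1) (b+1) ×ˢ Finset.Icc (b+1) (n+1)) with hS
  have hmemS : ∀ p : ℕ × ℕ, p ∈ S ↔
      ((1 ≤ p.1 ∧ p.1 ≤ a-1 ∧ a ≤ p.2 ∧ p.2 ≤ b-1) ∨
       (a+1 ≤ p.1 ∧ p.1 ≤ b ∧ b+1 ≤ p.2 ∧ p.2 ≤ (n+1)) ∨
       (1 ≤ p.1 ∧ p.1 ≤ a-1 ∧ a-1 ≤ p.2 ∧ p.2 ≤ a-1) ∨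
       (b+1 ≤ p.1 ∧ p.1 ≤ b+1 ∧ b+1 ≤ p.2 ∧ p.2 ≤ (n+1))) := by
    intro p
    rw [hS]
    simp only [Finset.mem_union, Finset.mem_product, Finset.mem_Icc, or_assoc]
    omega
  have hle : ∀ p ∈ S, p.1 ≤ p.2 := by
    intro p hp
    rw [hmemS] at hp
    omega
  set T : Finset (Finset ℕ) := S.image (fun p => Finset.Icc p.1 p.2) with hT
  have hset : {J : Finset ℕ | IsInterval n J ∧ iRel n (Finset.Icc a b) J} = ↑T := by
    ext J
    simp only [Set.mem_setOf_eq, Finset.coe_image, Set.mem_image, Finset.mem_coe, hT]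
    constructor
    · rintro ⟨⟨c, d, hc1, hcd, hdN, rfl⟩, hrel⟩
      have hint : Finset.Icc a b ∩ Finset.Icc c d = Finset.Icc (max a c) (min b d) :=
        icc_inter a b c d
      rcases hrel with ⟨hne, hng, hnj⟩ | ⟨hdis, e, f, he1, hef, hfN, hu⟩
      · -- nontrivial intersection
        have hmm : max a c ≤ min b d := by
          by_contra hmm
          exact hne (hint.trans (Finset.Icc_eq_empty hmm))
        have hng' : ¬ (c ≤ a ∧ b ≤ d) := by
          rintro ⟨h1, h2⟩
          apply hng
          rw [hint]
          congr 1 <;> omega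
        have hnj' : ¬ (a ≤ c ∧ d ≤ b) := by
          rintro ⟨h1, h2⟩
          apply hnj
          rw [hint]
          congr 1 <;> omega
        refine ⟨(c, d), ?_, rfl⟩
        rw [hmemS]
        simp only
        omega
      · -- disjoint, union interval
        have hmm : ¬ (max a c ≤ min b d) := by
          intro hmm
          have : max a c ∈ (∅ : Finset ℕ) := by
            rw [← hdis, hint]
            exact Finset.mem_Icc.mpr ⟨le_refl _, hmm⟩
          simp at this
        have haU : a ∈ Finset.Icc e f := by
          rw [← hu]; exact Finset.mem_union_left _ (Finset.mem_Icc.mpr ⟨le_refl a, hab⟩)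
        have hcU : c ∈ Finset.Icc e f := by
          rw [← hu]; exact Finset.mem_union_right _ (Finset.mem_Icc.mpr ⟨le_refl c, hcd⟩)
        have hbU : b ∈ Finset.Icc e f := by
          rw [← hu]; exact Finset.mem_union_left _ (Finset.mem_Icc.mpr ⟨hab, le_refl b⟩)
        have hdU : d ∈ Finset.Icc e f := by
          rw [← hu]; exact Finset.mem_union_right _ (Finset.mem_Icc.mpr ⟨hcd, le_refl d⟩)
        simp only [Finset.mem_Icc] at haU hcU hbU hdU
        refine ⟨(c, d), ?_, rfl⟩
        rw [hmemS]
        simp only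
        rcases (by omega : d < a ∨ b < c) with hlt | hlt
        · -- left adjacent: show d = a - 1
          have : d = a - 1 := by
            by_contra hne'
            have hm : a - 1 ∈ Finset.Icc e f := Finset.mem_Icc.mpr (by omega)
            rw [← hu, Finset.mem_union, Finset.mem_Icc, Finset.mem_Icc] at hm
            omega
          omega
        · have : c = b + 1 := by
            by_contra hne'
            have hm : b + 1 ∈ Finset.Icc e f := Finset.mem_Icc.mpr (by omega)
            rw [← hu, Finset.mem_union, Finset.mem_Icc, Finset.mem_Icc] at hm
            omega
          omega
    · rintro ⟨⟨c, d⟩, hp, rfl⟩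
      rw [hmemS] at hp
      simp only at hp
      have hint : Finset.Icc a b ∩ Finset.Icc c d = Finset.Icc (max a c) (min b d) :=
        icc_inter a b c d
      constructor
      · exact ⟨c, d, by omega, by omega, by omega, rfl⟩
      · rcases hp with h | h | h | h
        · left
          rw [hint]
          refine ⟨?_, ?_, ?_⟩
          · intro hE
            have : max a c ∈ (∅ : Finset ℕ) := hE ▸ Finset.mem_Icc.mpr ⟨le_refl _, by omega⟩
            simp at this
          · intro hE
            have := icc_inj (by omega) hab hE
            omega
          · intro hE
            have := icc_inj (by omega) (by omega) hE
            omega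
        · left
          rw [hint]
          refine ⟨?_, ?_, ?_⟩
          · intro hE
            have : max a c ∈ (∅ : Finset ℕ) := hE ▸ Finset.mem_Icc.mpr ⟨le_refl _, by omega⟩
            simp at this
          · intro hE
            have := icc_inj (by omega) hab hE
            omega
          · intro hE
            have := icc_inj (by omega) (by omega) hE
            omega
        · right
          constructor
          · rw [hint]
            exact Finset.Icc_eq_empty (by omega)
          · refine ⟨c, b, by omega, by omega, by omega, ?_⟩
            ext x
            simp only [Finset.mem_union, Finset.mem_Icc]
            omega
        · right
          constructor
          · rw [hint]
            exact Finset.Icc_eq_empty (by omega)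
          · refine ⟨a, d, by omega, by omega, by omega, ?_⟩
            ext x
            simp only [Finset.mem_union, Finset.mem_Icc]
            omega
  have hcard : iCount n (Finset.Icc a b) = T.card := by
    have h1 : iCount n (Finset.Icc a b)
        = Set.ncard {J : Finset ℕ | IsInterval n J ∧ iRel n (Finset.Icc a b) J} :=
      Nat.card_coe_set_eq _
    rw [h1, hset, Set.ncard_coe_finset]
  have hinj : Set.InjOn (fun p : ℕ × ℕ => Finset.Icc p.1 p.2) ↑S := by
    rintro ⟨c, d⟩ hp ⟨c', d'⟩ hp' he
    have h1 := hle _ hp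
    have h2 := hle _ hp'
    have := icc_inj h1 h2 he
    simp only [Prod.mk.injEq]
    exact this
  have hTS : T.card = S.card := Finset.card_image_of_injOn hinj
  have hScard : S.card = (b + 1 - a) * ((a - 1) + (n + 1 - b)) := by
    rw [hS]
    rw [Finset.card_union_of_disjoint, Finset.card_union_of_disjoint,
        Finset.card_union_of_disjoint]
    · simp only [Finset.card_product, Nat.card_Icc]
      obtain ⟨p, rfl⟩ : ∃ p, a = p + 1 := ⟨a - 1, by omega⟩
      obtain ⟨l, hb⟩ : ∃ l, b = (p + 1) + l := ⟨b - (p+1), by omega⟩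
      subst hb
      obtain ⟨q, hq⟩ : ∃ q, n + 1 = (p + 1 + l) + q := ⟨n + 1 - (p+1+l), by omega⟩
      have e1 : p + 1 + l - 1 + 1 - (p + 1) = l := by omega
      have e2 : p + 1 - 1 + 1 - 1 = p := by omega
      have e3 : p + 1 + l + 1 - (p + 1 + 1) = l := by omega
      have e4 : n + 1 + 1 - (p + 1 + l + 1) = q := by omega
      have e5 : p + 1 - 1 + 1 - (p + 1 - 1) = 1 := by omega
      have e6 : p + 1 + l + 1 + 1 - (p + 1 + l + 1) = 1 := by omega
      have e7 : p + 1 + l + 1 - (p + 1) = l + 1 := by omega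
      have e8 : p + 1 - 1 = p := by omega
      have e9 : n + 1 - (p + 1 + l) = q := by omega
      rw [e1, e2, e3, e4, e5, e6, e7, e8, e9]
      ring
    · simp only [Finset.disjoint_left, Finset.mem_product, Finset.mem_Icc, Finset.mem_union,
        Finset.mem_singleton]
      rintro ⟨c, d⟩ h1 h2
      simp at h1 h2
      omega
    · simp only [Finset.disjoint_left, Finset.mem_product, Finset.mem_Icc, Finset.mem_union,
        Finset.mem_singleton]
      rintro ⟨c, d⟩ h1 h2
      simp at h1 h2
      omega
    · simp only [Finset.disjoint_left, Finset.mem_product, Finset.mem_Icc, Finset.mem_union,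
        Finset.mem_singleton]
      rintro ⟨c, d⟩ h1 h2
      simp at h1 h2
      omega
  rw [hcard, hTS, hScard]

lemma bound_lemma (N m ℓ : ℕ) (hm : m = N / 2) (h2 : ℓ ≤ N) :
    ℓ * (N - ℓ) ≤ m * (N - m) := by
  have hN : N = 2*m ∨ N = 2*m + 1 := by omega
  obtain ⟨q, hq⟩ : ∃ q, N - ℓ = q ∧ ℓ + q = N := ⟨N - ℓ, rfl, by omega⟩
  obtain ⟨r, hr⟩ : ∃ r, N - m = r ∧ m + r = N := ⟨N - m, rfl, by omega⟩
  rw [hq.1, hr.1]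
  rcases hN with hN | hN
  · zify
    nlinarith [sq_nonneg ((ℓ:ℤ) - q)]
  · have hne : (ℓ:ℤ) - q ≠ 0 := by omega
    have hs : 1 ≤ ((ℓ:ℤ) - q)^2 := by
      rcases lt_or_gt_of_ne hne with h | h <;> nlinarith
    zify
    nlinarith

lemma len_odd (m ℓ : ℕ) (h2 : ℓ ≤ 2*m+1)
    (he : ℓ * (2*m+1-ℓ) = m*(m+1)) : ℓ = m ∨ ℓ = m+1 := by
  obtain ⟨q, hq⟩ : ∃ q, 2*m+1-ℓ = q ∧ ℓ + q = 2*m+1 := ⟨_, rfl, by omega⟩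
  rw [hq.1] at he
  have h : ((ℓ:ℤ) - m) * ((ℓ:ℤ) - m - 1) = 0 := by
    have h1 : (ℓ:ℤ) * q = m*(m+1) := by exact_mod_cast he
    have h2 : (ℓ:ℤ) + q = 2*m+1 := by exact_mod_cast hq.2
    nlinarith
  rcases mul_eq_zero.mp h with h | h <;> [left; right] <;> omega

lemma len_even (m ℓ : ℕ) (h2 : ℓ ≤ 2*m)
    (he : ℓ * (2*m-ℓ) = m*m) : ℓ = m := by
  obtain ⟨q, hq⟩ : ∃ q, 2*m-ℓ = q ∧ ℓ + q = 2*m := ⟨_, rfl, by omega⟩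
  rw [hq.1] at he
  have h : ((ℓ:ℤ) - m) * ((ℓ:ℤ) - m) = 0 := by
    have h1 : (ℓ:ℤ) * q = m*m := by exact_mod_cast he
    have h2 : (ℓ:ℤ) + q = 2*m := by exact_mod_cast hq.2
    nlinarith
  rcases mul_eq_zero.mp h with h | h <;> omega

lemma iMax_eq {n : ℕ} (hn : 3 ≤ n) :
    iMax n = ((n+1)/2) * ((n+1) - (n+1)/2) := by
  set m := (n+1)/2 with hm
  have hm1 : 1 ≤ m := by omega
  have hmn : m ≤ n + 1 := by omega
  have hmem : m * ((n+1) - m) ∈ {k | ∃ γ : Finset ℕ, IsInterval n γ ∧ iCount n γ = k} := by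
    refine ⟨Finset.Icc 1 m, ⟨1, m, le_refl 1, hm1, hmn, rfl⟩, ?_⟩
    rw [count_eq (le_refl 1) hm1 hmn]
    have e1 : m + 1 - 1 = m := by omega
    have e2 : (1 - 1) + (n + 1 - m) = n + 1 - m := by omega
    rw [e1, e2]
  have hub : ∀ k ∈ {k | ∃ γ : Finset ℕ, IsInterval n γ ∧ iCount n γ = k},
      k ≤ m * ((n+1) - m) := by
    rintro k ⟨γ, ⟨a, b, ha, hab, hbn, rfl⟩, hk⟩
    rw [count_eq ha hab hbn] at hk
    have e : (a - 1) + (n + 1 - b) = (n + 1) - (b + 1 - a) := by omega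
    rw [e] at hk
    rw [← hk]
    exact bound_lemma (n+1) m (b+1-a) hm (by omega)
  exact le_antisymm (csSup_le ⟨_, hmem⟩ hub) (le_csSup ⟨_, hub⟩ hmem)

lemma card_image_icc (k s : ℕ) :
    ((Finset.Icc 1 s).image fun c => Finset.Icc c (c+k)).card = s := by
  rw [Finset.card_image_of_injOn, Nat.card_Icc]
  · omega
  · intro c _ c' _ h
    exact (icc_inj (by omega) (by omega) h).1

theorem stmt9 {n : ℕ} (hn : 3 ≤ n) :
    (Even n →
      Nat.card {γ : Finset ℕ // IsInterval n γ ∧ iCount n γ = iMax n} = n + 3) ∧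
    (Odd n →
      Nat.card {γ : Finset ℕ // IsInterval n γ ∧ iCount n γ = iMax n} = (n + 3) / 2) := by
  constructor
  · rintro ⟨m, hnm⟩
    have hnm : n = 2 * m := by omega
    have hm2 : 2 ≤ m := by omega
    set T : Finset (Finset ℕ) :=
      ((Finset.Icc 1 (m+2)).image fun c => Finset.Icc c (c+(m-1))) ∪
      ((Finset.Icc 1 (m+1)).image fun c => Finset.Icc c (c+m)) with hT
    have hset : {γ : Finset ℕ | IsInterval n γ ∧ iCount n γ = iMax n} = ↑T := by
      ext γ
      simp only [Set.mem_setOf_eq, hT, Finset.coe_union, Finset.coe_image, Set.mem_union,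
        Set.mem_image, Finset.mem_coe, Finset.mem_Icc]
      constructor
      · rintro ⟨⟨a, b, ha, hab, hbn, rfl⟩, hmaxv⟩
        rw [count_eq ha hab hbn, iMax_eq hn] at hmaxv
        have e1 : (a - 1) + (n + 1 - b) = 2*m+1 - (b + 1 - a) := by omega
        have e2 : ((n+1)/2) * ((n+1) - (n+1)/2) = m * (m+1) := by
          have h1 : (n+1)/2 = m := by omega
          rw [h1]
          congr 1
          omega
        rw [e1, e2] at hmaxv
        rcases len_odd m (b+1-a) (by omega) hmaxv with h | h
        · left
          exact ⟨a, ⟨by omega, by omega⟩, by congr 1; omega⟩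
        · right
          exact ⟨a, ⟨by omega, by omega⟩, by congr 1; omega⟩
      · rintro (⟨c, ⟨hc1, hc2⟩, rfl⟩ | ⟨c, ⟨hc1, hc2⟩, rfl⟩)
        · refine ⟨⟨c, c+(m-1), by omega, by omega, by omega, rfl⟩, ?_⟩
          rw [count_eq (by omega) (by omega) (by omega), iMax_eq hn]
          have e1 : c+(m-1)+1-c = m := by omega
          have e2 : (c-1) + (n+1-(c+(m-1))) = m+1 := by omega
          have e3 : (n+1)/2 = m := by omega
          have e4 : n+1 - m = m+1 := by omega
          rw [e1, e2, e3, e4]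
        · refine ⟨⟨c, c+m, by omega, by omega, by omega, rfl⟩, ?_⟩
          rw [count_eq (by omega) (by omega) (by omega), iMax_eq hn]
          have e1 : c+m+1-c = m+1 := by omega
          have e2 : (c-1) + (n+1-(c+m)) = m := by omega
          have e3 : (n+1)/2 = m := by omega
          have e4 : n+1 - m = m+1 := by omega
          rw [e1, e2, e3, e4, Nat.mul_comm]
    have hcard : Nat.card {γ : Finset ℕ // IsInterval n γ ∧ iCount n γ = iMax n} = T.card := by
      have h1 : Nat.card {γ : Finset ℕ // IsInterval n γ ∧ iCount n γ = iMax n}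
          = Set.ncard {γ : Finset ℕ | IsInterval n γ ∧ iCount n γ = iMax n} :=
        Nat.card_coe_set_eq _
      rw [h1, hset, Set.ncard_coe_finset]
    rw [hcard, hT, Finset.card_union_of_disjoint, card_image_icc, card_image_icc]
    · omega
    · simp only [Finset.disjoint_left, Finset.mem_image, Finset.mem_Icc]
      rintro γ ⟨c, hc, rfl⟩ ⟨c', hc', he⟩
      have := icc_inj (by omega) (by omega) he.symm
      omega
  · rintro ⟨m, hnm⟩
    have hm1 : 1 ≤ m := by omega
    set T : Finset (Finset ℕ) :=
      (Finset.Icc 1 (m+2)).image fun c => Finset.Icc c (c+m) with hT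
    have hset : {γ : Finset ℕ | IsInterval n γ ∧ iCount n γ = iMax n} = ↑T := by
      ext γ
      simp only [Set.mem_setOf_eq, hT, Finset.coe_image, Set.mem_image,
        Finset.mem_coe, Finset.mem_Icc]
      constructor
      · rintro ⟨⟨a, b, ha, hab, hbn, rfl⟩, hmaxv⟩
        rw [count_eq ha hab hbn, iMax_eq hn] at hmaxv
        have e1 : (a - 1) + (n + 1 - b) = 2*(m+1) - (b + 1 - a) := by omega
        have e2 : ((n+1)/2) * ((n+1) - (n+1)/2) = (m+1) * (m+1) := by
          have h1 : (n+1)/2 = m+1 := by omega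
          rw [h1]
          congr 1
          omega
        rw [e1, e2] at hmaxv
        have h := len_even (m+1) (b+1-a) (by omega) hmaxv
        exact ⟨a, ⟨by omega, by omega⟩, by congr 1; omega⟩
      · rintro ⟨c, ⟨hc1, hc2⟩, rfl⟩
        refine ⟨⟨c, c+m, by omega, by omega, by omega, rfl⟩, ?_⟩
        rw [count_eq (by omega) (by omega) (by omega), iMax_eq hn]
        have e1 : c+m+1-c = m+1 := by omega
        have e2 : (c-1) + (n+1-(c+m)) = m+1 := by omega
        have e3 : (n+1)/2 = m+1 := by omega
        have e4 : n+1 - (m+1) = m+1 := by omega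
        rw [e1, e2, e3, e4]
    have hcard : Nat.card {γ : Finset ℕ // IsInterval n γ ∧ iCount n γ = iMax n} = T.card := by
      have h1 : Nat.card {γ : Finset ℕ // IsInterval n γ ∧ iCount n γ = iMax n}
          = Set.ncard {γ : Finset ℕ | IsInterval n γ ∧ iCount n γ = iMax n} :=
        Nat.card_coe_set_eq _
      rw [h1, hset, Set.ncard_coe_finset]
    rw [hcard, hT, card_image_icc]
    omega
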